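/- arXiv:1410.8595 — 6 statements merged into one kernel-verified Lean document; each statement's English description precedes it below -/
import Mathlib

section
/- Let m ∈ ℝ, v > 0, let γ be the Gaussian probability measure on ℝ with mean m and variance v, and let f : ℝ → ℂ be Lebesgue integrable such that its Fourier transform 𝔉f is also Lebesgue integrable. Then for every x ∈ ℝ, ∫_ℝ f(x + y) dγ(y) = (1/(2π)) ∫_ℝ e^{iνx} · 𝔉f(ν) · exp(imν − vν²/2) dν. -/
open MeasureTheory ProbabilityTheory Real Complex

/-! Translating by `x` turns `γ` into the Gaussian of mean `m + x`, whose density is the inverse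
Fourier transform of its characteristic function `exp(i(m + x)ν − vν²/2)`; that inversion is a
single Gaussian integral. Substituting it into `∫ f dγ` and exchanging the two integrals, which
Fubini allows because the integrand is dominated by `e^{−vν²/2} |f(y)|`, gives the formula. -/

/-- The Fourier transform with angular frequency: unlike Mathlib's `𝓕`, there is no `2π`
in the exponent. -/
noncomputable def angularFourierIntegral (f : ℝ → ℂ) (ν : ℝ) : ℂ :=
  ∫ y : ℝ, cexp (-I * ν * y) * f y

lemma integrable_charFun_gaussianReal (μ : ℝ) {v : NNReal} (hv : v ≠ 0) :
    Integrable (charFun (gaussianReal μ v)) := by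
  refine (integrable_exp_neg_mul_sq (b := (v : ℝ) / 2) (by positivity)).mono'
    (by fun_prop) (ae_of_all _ fun ν => le_of_eq ?_)
  rw [charFun_gaussianReal, Complex.norm_exp]
  simp [← ofReal_pow]
  ring

lemma integral_angularFourierIntegral_mul_comm {f g : ℝ → ℂ} (hf : Integrable f)
    (hg : Integrable g) :
    ∫ z, angularFourierIntegral g z * f z = ∫ ν, angularFourierIntegral f ν * g ν := by
  have hint : Integrable (fun p : ℝ × ℝ => cexp (-I * p.1 * p.2) * g p.2 * f p.1)
      (volume.prod volume) := by
    refine (hf.norm.mul_prod hg.norm).mono'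
      (((by fun_prop : Continuous _).aestronglyMeasurable.mul hg.1.comp_snd).mul hf.1.comp_fst)
      (ae_of_all _ fun p => ?_)
    rw [norm_mul, norm_mul, Complex.norm_exp]
    simp [mul_comm]
  simp only [angularFourierIntegral, ← integral_mul_const]
  rw [integral_integral_swap hint]
  congr 1 with ν
  congr 1 with z
  ring_nf

lemma gaussianPDFReal_eq_angularFourierIntegral_charFun (μ : ℝ) {v : NNReal} (hv : v ≠ 0)
    (z : ℝ) :
    (gaussianPDFReal μ v z : ℂ) =
      (2 * π : ℂ)⁻¹ * angularFourierIntegral (charFun (gaussianReal μ v)) z := by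
  have hb : 0 < ((v : ℂ) / 2).re := by simp; positivity
  have hexp : ∀ ν : ℝ, cexp (-I * z * ν) * charFun (gaussianReal μ v) ν =
      cexp (I * (μ - z : ℝ) * ν) * cexp (-((v : ℂ) / 2) * ν ^ 2) := by
    intro ν
    rw [charFun_gaussianReal, ← Complex.exp_add, ← Complex.exp_add]
    push_cast
    ring_nf
  simp only [angularFourierIntegral, hexp, fourierIntegral_gaussian hb]
  have hv' : (0 : ℝ) < v := by positivity
  have hsqrt : ((π : ℂ) / ((v : ℂ) / 2)) ^ (1 / 2 : ℂ) = (√(2 * π / v) : ℝ) := by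
    rw [Real.sqrt_eq_rpow, Complex.ofReal_cpow (by positivity)]
    push_cast
    ring_nf
  have hconst : (2 * π)⁻¹ * √(2 * π / v) = (√(2 * π * v))⁻¹ := by
    rw [Real.sqrt_div' _ hv'.le, Real.sqrt_mul' _ hv'.le]
    have h2pi : (0 : ℝ) < √(2 * π) := by positivity
    have hsv : (0 : ℝ) < √v := Real.sqrt_pos.2 hv'
    field_simp
    rw [Real.sq_sqrt (by positivity)]
  rw [hsqrt, gaussianPDFReal, ← hconst]
  push_cast
  ring_nf

theorem stmt_2_general (m : ℝ) (v : NNReal) (hv : 0 < v) (f : ℝ → ℂ)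
    (hf : Integrable f) :
    ∀ x : ℝ,
      ∫ y, f (x + y) ∂(gaussianReal m v)
        = (1 / (2 * Real.pi) : ℂ) *
            ∫ ν : ℝ, Complex.exp (Complex.I * ν * x) *
              (∫ y : ℝ, Complex.exp (-Complex.I * ν * y) * f y) *
              Complex.exp (Complex.I * m * ν - (v : ℂ) * ν ^ 2 / 2) := by
  intro x
  have hshift : ∀ ν : ℝ, cexp (I * ν * x) * cexp (I * m * ν - (v : ℂ) * ν ^ 2 / 2) =
      charFun (gaussianReal (m + x) v) ν := by
    intro ν
    rw [charFun_gaussianReal, ← Complex.exp_add]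
    push_cast
    ring_nf
  calc ∫ y, f (x + y) ∂(gaussianReal m v)
      = ∫ z, f z ∂(gaussianReal (m + x) v) := by
        rw [← gaussianReal_map_const_add x, (measurableEmbedding_addLeft x).integral_map]
    _ = ∫ z, (gaussianPDFReal (m + x) v z : ℂ) * f z := by
        simp only [integral_gaussianReal_eq_integral_smul hv.ne', Complex.real_smul]
    _ = (2 * π : ℂ)⁻¹ *
          ∫ z, angularFourierIntegral (charFun (gaussianReal (m + x) v)) z * f z := by
        simp only [gaussianPDFReal_eq_angularFourierIntegral_charFun _ hv.ne', mul_assoc,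
          integral_const_mul]
    _ = (2 * π : ℂ)⁻¹ *
          ∫ ν, angularFourierIntegral f ν * charFun (gaussianReal (m + x) v) ν := by
        rw [integral_angularFourierIntegral_mul_comm hf
          (integrable_charFun_gaussianReal _ hv.ne')]
    _ = _ := by
        simp only [one_div, ← hshift, angularFourierIntegral]
        congr 2 with ν
        ring

/-- Fourier (convolution) representation of the Gaussian smoothing step: if `f` and its
Fourier transform `𝔉f(ν) = ∫ e^{−iνy} f(y) dy` are integrable, then for the Gaussian
measure `γ` with mean `m` and variance `v > 0`,
`∫ f(x+y) dγ(y) = (1/(2π)) ∫ e^{iνx} 𝔉f(ν) exp(imν − vν²/2) dν`. -/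
theorem stmt_2 (m : ℝ) (v : NNReal) (hv : 0 < v) (f : ℝ → ℂ)
    (hf : Integrable f)
    (hFf : Integrable (fun ν : ℝ => ∫ y : ℝ, Complex.exp (-Complex.I * ν * y) * f y)) :
    ∀ x : ℝ,
      ∫ y, f (x + y) ∂(gaussianReal m v)
        = (1 / (2 * Real.pi) : ℂ) *
            ∫ ν : ℝ, Complex.exp (Complex.I * ν * x) *
              (∫ y : ℝ, Complex.exp (-Complex.I * ν * y) * f y) *
              Complex.exp (Complex.I * m * ν - (v : ℂ) * ν ^ 2 / 2) :=
  stmt_2_general m v hv f hf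
end

section
/- Let m ∈ ℝ, v > 0, let γ be the Gaussian probability measure on ℝ with mean m and variance v, and let f : ℝ → ℂ be Lebesgue integrable such that both ν ↦ 𝔉f(ν) and ν ↦ ν·𝔉f(ν) are Lebesgue integrable. Then for every x ∈ ℝ, ∫_ℝ (y − m) f(x + y) dγ(y) = (v/(2π)) ∫_ℝ e^{iνx} · (iν) · 𝔉f(ν) · exp(imν − vν²/2) dν. -/
/-! By Fubini, the right-hand side is `∫ f(x + y) K(y) dy` with
`K(y) = (v/2π) ∫ iν e^{iν(m - y)} e^{-vν²/2} dν`. Integrating the derivative of the Gaussian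
`e^{iνt} e^{-bν²}` over the line gives its first moment in closed form, and with `b = v/2` this
identifies `K(y)` with `(y - m) p(y)`, `p` the density of `γ`. -/

open MeasureTheory ProbabilityTheory Real Complex
open scoped NNReal

lemma hasDerivAt_cexp_mul_gaussian (b : ℂ) (t x : ℝ) :
    HasDerivAt (fun x : ℝ => cexp (I * t * x) * cexp (-b * x ^ 2))
      ((I * t - 2 * b * x) * (cexp (I * t * x) * cexp (-b * x ^ 2))) x := by
  have hlin : HasDerivAt (fun x : ℝ => I * t * (x : ℂ)) (I * t) x := by
    simpa using (hasDerivAt_id (x : ℂ)).comp_ofReal.const_mul (I * t)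
  have hsq : HasDerivAt (fun x : ℝ => -b * (x : ℂ) ^ 2) (-b * (2 * x)) x := by
    simpa using ((hasDerivAt_pow 2 (x : ℂ)).comp_ofReal).const_mul (-b)
  exact (hlin.cexp.mul hsq.cexp).congr_deriv (by ring)

lemma integrable_cexp_mul_gaussian {b : ℂ} (hb : 0 < b.re) (t : ℝ) :
    Integrable (fun x : ℝ => cexp (I * t * x) * cexp (-b * x ^ 2)) :=
  (integrable_cexp_neg_mul_sq hb).bdd_mul (c := 1) (by fun_prop) (.of_forall fun x => by
    rw [show I * t * x = ((t * x : ℝ) : ℂ) * I by push_cast; ring, norm_exp_ofReal_mul_I])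

lemma integrable_mul_cexp_mul_gaussian {b : ℂ} (hb : 0 < b.re) (t : ℝ) :
    Integrable (fun x : ℝ => (x : ℂ) * (cexp (I * t * x) * cexp (-b * x ^ 2))) := by
  refine ((integrable_mul_cexp_neg_mul_sq hb).bdd_mul (c := 1) (f := fun x : ℝ => cexp (I * t * x))
    (by fun_prop) (.of_forall fun x => ?_)).congr (.of_forall fun x => by dsimp only; ring)
  rw [show I * t * x = ((t * x : ℝ) : ℂ) * I by push_cast; ring, norm_exp_ofReal_mul_I]

lemma fourierIntegral_mul_gaussian {b : ℂ} (hb : 0 < b.re) (t : ℝ) :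
    ∫ x : ℝ, (x : ℂ) * (cexp (I * t * x) * cexp (-b * x ^ 2))
      = I * t / (2 * b) * ((π / b) ^ (1 / 2 : ℂ) * cexp (-t ^ 2 / (4 * b))) := by
  have hb0 : b ≠ 0 := by rintro rfl; simp at hb
  have hF := integrable_cexp_mul_gaussian hb t
  have hxF := integrable_mul_cexp_mul_gaussian hb t
  have hsplit : ∫ x : ℝ, (I * t - 2 * b * x) * (cexp (I * t * x) * cexp (-b * x ^ 2))
      = I * t * (∫ x : ℝ, cexp (I * t * x) * cexp (-b * x ^ 2))
        - 2 * b * ∫ x : ℝ, (x : ℂ) * (cexp (I * t * x) * cexp (-b * x ^ 2)) := by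
    rw [← integral_const_mul, ← integral_const_mul,
      ← integral_sub (hF.const_mul _) (hxF.const_mul _)]
    congr 1 with x
    ring
  have hzero := integral_eq_zero_of_hasDerivAt_of_integrable
    (hasDerivAt_cexp_mul_gaussian b t)
    (((hF.const_mul (I * t)).sub (hxF.const_mul (2 * b))).congr
      (.of_forall fun x => by simp only [Pi.sub_apply]; ring)) hF
  rw [hsplit, fourierIntegral_gaussian hb] at hzero
  rw [div_mul_eq_mul_div, eq_div_iff (mul_ne_zero two_ne_zero hb0)]
  linear_combination -hzero

lemma Integrable.prod_mul_cexp_mul_I {α β : Type*} [MeasurableSpace α] [MeasurableSpace β]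
    {μ : Measure α} {ν : Measure β} [SFinite ν] {h : α → ℂ} {g : β → ℂ} {φ : α × β → ℝ}
    (hh : Integrable h μ) (hg : Integrable g ν) (hφ : Measurable φ) :
    Integrable (fun p : α × β => h p.1 * cexp (I * φ p) * g p.2) (μ.prod ν) := by
  refine (hh.norm.mul_prod hg.norm).mono' ?_ (.of_forall fun p => ?_)
  · exact (hh.1.comp_fst.mul (by fun_prop)).mul hg.1.comp_snd
  · rw [norm_mul, norm_mul, mul_comm I, norm_exp_ofReal_mul_I, mul_one]

/-- `(y - m) p(y) = -v p'(y)`, so this is the Fourier representation of the derivative of the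
Gaussian density. -/
lemma sub_mul_gaussianPDFReal_eq_integral (m : ℝ) {v : ℝ≥0} (hv : 0 < v) (y : ℝ) :
    (((y - m) * gaussianPDFReal m v y : ℝ) : ℂ)
      = v / (2 * π) * ∫ ν : ℝ, I * ν * cexp (-(v / 2 : ℂ) * ν ^ 2) * cexp (I * ↑((m - y) * ν)) := by
  have hb : 0 < (v / 2 : ℂ).re := by simpa using hv
  have hs : 0 < √(2 * π * v) := by positivity
  have hsqrt : ((π : ℂ) / (v / 2)) ^ (1 / 2 : ℂ) = ((2 * π / √(2 * π * v) : ℝ) : ℂ) := by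
    have h : 2 * π / √(2 * π * v) = √(2 * π / v) := by
      rw [div_eq_iff hs.ne', ← Real.sqrt_mul (by positivity),
        show 2 * π / v * (2 * π * v) = (2 * π) ^ 2 by field_simp, Real.sqrt_sq (by positivity)]
    rw [h, Real.sqrt_eq_rpow, Complex.ofReal_cpow (by positivity)]
    push_cast
    ring_nf
  have hI : ∫ ν : ℝ, I * ν * cexp (-(v / 2 : ℂ) * ν ^ 2) * cexp (I * ↑((m - y) * ν))
      = I * ∫ ν : ℝ, (ν : ℂ) * (cexp (I * ↑(m - y) * ν) * cexp (-(v / 2 : ℂ) * ν ^ 2)) := by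
    rw [← integral_const_mul]
    congr 1 with ν
    push_cast
    ring_nf
  have hv0 : (v : ℂ) ≠ 0 := by exact_mod_cast hv.ne'
  rw [hI, fourierIntegral_mul_gaussian hb, hsqrt, gaussianPDFReal]
  push_cast
  rw [show -((m : ℂ) - y) ^ 2 / (4 * (v / 2)) = -(y - m) ^ 2 / (2 * v) by ring]
  field_simp
  rw [I_sq]
  ring

lemma fourier_integrand_eq_integral_comp_add (f : ℝ → ℂ) (m : ℝ) (v : ℝ≥0) (x ν : ℝ) :
    cexp (I * ν * x) * (I * ν) * (∫ y : ℝ, cexp (-I * ν * y) * f y) *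
        cexp (I * m * ν - (v : ℂ) * ν ^ 2 / 2)
      = ∫ y : ℝ, I * ν * cexp (-(v / 2 : ℂ) * ν ^ 2) * cexp (I * ↑((m - y) * ν)) * f (x + y) := by
  rw [← integral_add_left_eq_self _ x, mul_right_comm, ← integral_const_mul]
  congr 1 with y
  have hexp : cexp (I * ν * x) * cexp (I * m * ν - (v : ℂ) * ν ^ 2 / 2) * cexp (-I * ν * ↑(x + y))
      = cexp (-(v / 2 : ℂ) * ν ^ 2) * cexp (I * ↑((m - y) * ν)) := by
    simp only [← Complex.exp_add]
    push_cast
    ring_nf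
  linear_combination I * ν * f (x + y) * hexp

theorem stmt_3_general (m : ℝ) (v : NNReal) (hv : 0 < v) (f : ℝ → ℂ)
    (hf : Integrable f) :
    ∀ x : ℝ,
      ∫ y, ((y : ℂ) - (m : ℂ)) * f (x + y) ∂(gaussianReal m v)
        = ((v : ℂ) / (2 * Real.pi)) *
            ∫ ν : ℝ, Complex.exp (Complex.I * ν * x) * (Complex.I * ν) *
              (∫ y : ℝ, Complex.exp (-Complex.I * ν * y) * f y) *
              Complex.exp (Complex.I * m * ν - (v : ℂ) * ν ^ 2 / 2) := by
  intro x
  have hb : 0 < (v / 2 : ℂ).re := by simpa using hv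
  have hK : Integrable (Function.uncurry fun ν y : ℝ =>
      I * ν * cexp (-(v / 2 : ℂ) * ν ^ 2) * cexp (I * ↑((m - y) * ν)) * f (x + y))
      (volume.prod volume) :=
    Integrable.prod_mul_cexp_mul_I (h := fun ν : ℝ => I * ν * cexp (-(v / 2 : ℂ) * ν ^ 2))
      (g := fun y => f (x + y)) (φ := fun p => (m - p.2) * p.1)
      (by simpa only [mul_assoc] using (integrable_mul_cexp_neg_mul_sq hb).const_mul I)
      (hf.comp_add_left x) (by fun_prop)
  simp_rw [fourier_integrand_eq_integral_comp_add f m v x]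
  rw [integral_gaussianReal_eq_integral_smul hv.ne', integral_integral_swap hK,
    ← integral_const_mul]
  congr 1 with y
  rw [integral_mul_const, ← mul_assoc, ← sub_mul_gaussianPDFReal_eq_integral m hv y, real_smul]
  push_cast
  ring

/-- Fourier representation of the gradient step: if `f` is integrable, and both
`ν ↦ 𝔉f(ν)` and `ν ↦ ν·𝔉f(ν)` are integrable, where `𝔉f(ν) = ∫ e^{−iνy} f(y) dy`, then
for the Gaussian measure `γ` with mean `m` and variance `v > 0`,
`∫ (y−m) f(x+y) dγ(y) = (v/(2π)) ∫ e^{iνx} (iν) 𝔉f(ν) exp(imν − vν²/2) dν`. -/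
theorem stmt_3 (m : ℝ) (v : NNReal) (hv : 0 < v) (f : ℝ → ℂ)
    (hf : Integrable f)
    (hFf : Integrable (fun ν : ℝ => ∫ y : ℝ, Complex.exp (-Complex.I * ν * y) * f y))
    (hFf' : Integrable
      (fun ν : ℝ => (ν : ℂ) * ∫ y : ℝ, Complex.exp (-Complex.I * ν * y) * f y)) :
    ∀ x : ℝ,
      ∫ y, ((y : ℂ) - (m : ℂ)) * f (x + y) ∂(gaussianReal m v)
        = ((v : ℂ) / (2 * Real.pi)) *
            ∫ ν : ℝ, Complex.exp (Complex.I * ν * x) * (Complex.I * ν) *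
              (∫ y : ℝ, Complex.exp (-Complex.I * ν * y) * f y) *
              Complex.exp (Complex.I * m * ν - (v : ℂ) * ν ^ 2 / 2) :=
  stmt_3_general m v hv f hf
end

section
/- Let m ∈ ℝ, v > 0, let γ be the Gaussian probability measure on ℝ with mean m and variance v, and let f : ℝ → ℝ be square integrable with respect to γ. Then for every r ≥ |m|, |∫_{{y : |y| > r}} f(y) dγ(y)| ≤ √2 · (∫_ℝ f(y)² dγ(y))^{1/2} · exp(−(r − |m|)² / (4v)). -/
/-!
Cauchy–Schwarz bounds the tail integral by `‖f‖_{L²(γ)} · γ{|y| > r}^{1/2}`. The centred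
coordinate `y - m` is sub-Gaussian with variance proxy `v` under `γ`, so the Chernoff bound gives
`γ{y ≥ r} ≤ exp(-(r - m)²/(2v))` and `γ{y ≤ -r} ≤ exp(-(r + m)²/(2v))`, and both exponents are
at least `(r - |m|)²/(2v)`; taking the square root halves the exponent.
-/

open MeasureTheory ProbabilityTheory Real

open scoped NNReal

theorem abs_setIntegral_le_sqrt_integral_sq_mul_sqrt_measureReal {α : Type*}
    [MeasurableSpace α] {μ : Measure α} [IsFiniteMeasure μ] {f : α → ℝ}
    (hf : Integrable (fun x => f x ^ 2) μ) (s : Set α) :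
    |∫ x in s, f x ∂μ| ≤ √(∫ x, f x ^ 2 ∂μ) * √(μ.real s) := by
  by_cases hfs : IntegrableOn f s μ
  · have h_sq : MemLp (fun x => |f x|) (ENNReal.ofReal 2) (μ.restrict s) := by
      rw [ENNReal.ofReal_ofNat, memLp_two_iff_integrable_sq hfs.abs.aestronglyMeasurable]
      simpa only [sq_abs] using hf.restrict
    calc |∫ x in s, f x ∂μ| ≤ ∫ x in s, |f x| * 1 ∂μ := by
          simpa only [mul_one] using abs_integral_le_integral_abs
      _ ≤ (∫ x in s, |f x| ^ (2 : ℝ) ∂μ) ^ (1 / (2 : ℝ)) *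
            (∫ _ in s, (1 : ℝ) ^ (2 : ℝ) ∂μ) ^ (1 / (2 : ℝ)) :=
          integral_mul_le_Lp_mul_Lq_of_nonneg .two_two (.of_forall fun _ => abs_nonneg _)
            (.of_forall fun _ => zero_le_one) h_sq (memLp_const 1)
      _ = √(∫ x in s, f x ^ 2 ∂μ) * √(μ.real s) := by
          simp only [rpow_two, sq_abs, one_pow, setIntegral_const, smul_eq_mul, mul_one,
            ← sqrt_eq_rpow]
      _ ≤ √(∫ x, f x ^ 2 ∂μ) * √(μ.real s) := by
          gcongr ?_ * _
          exact sqrt_le_sqrt <| setIntegral_le_integral hf (.of_forall fun _ => sq_nonneg _)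
  · rw [integral_undef hfs, abs_zero]
    positivity

theorem hasSubgaussianMGF_sub_const_gaussianReal (m : ℝ) (v : ℝ≥0) :
    HasSubgaussianMGF (fun y => y - m) v (gaussianReal m v) := by
  rw [← HasSubgaussianMGF.id_map_iff (by fun_prop), gaussianReal_map_sub_const, sub_self]
  exact ⟨integrable_exp_mul_gaussianReal, fun t => by simp [mgf_id_gaussianReal]⟩

theorem gaussianReal_real_lt_abs_le {m : ℝ} {v : ℝ≥0} {r : ℝ} (hr : |m| ≤ r) :
    (gaussianReal m v).real {y | r < |y|} ≤ 2 * exp (-(r - |m|) ^ 2 / (2 * v)) := by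
  set γ := gaussianReal m v
  have hX := hasSubgaussianMGF_sub_const_gaussianReal m v
  have exp_le {a : ℝ} (ha : r - |m| ≤ a) :
      exp (-a ^ 2 / (2 * v)) ≤ exp (-(r - |m|) ^ 2 / (2 * v)) := by
    gcongr
  have h_upper : γ.real {y | r - m ≤ y - m} ≤ exp (-(r - m) ^ 2 / (2 * v)) :=
    hX.measure_ge_le (by linarith [le_abs_self m])
  have h_lower : γ.real {y | r + m ≤ -(y - m)} ≤ exp (-(r + m) ^ 2 / (2 * v)) :=
    hX.neg.measure_ge_le (by linarith [neg_abs_le m])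
  have h_sub : {y : ℝ | r < |y|} ⊆ {y | r - m ≤ y - m} ∪ {y | r + m ≤ -(y - m)} := by
    intro y (hy : r < |y|)
    rcases lt_abs.1 hy with h | h
    · exact .inl (show r - m ≤ y - m by linarith)
    · exact .inr (show r + m ≤ -(y - m) by linarith)
  calc γ.real {y | r < |y|}
      ≤ γ.real {y | r - m ≤ y - m} + γ.real {y | r + m ≤ -(y - m)} :=
        (measureReal_mono h_sub).trans (measureReal_union_le _ _)
    _ ≤ 2 * exp (-(r - |m|) ^ 2 / (2 * v)) := by
        linarith [exp_le (a := r - m) (by linarith [le_abs_self m]),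
          exp_le (a := r + m) (by linarith [neg_abs_le m])]

theorem stmt_4_general (m : ℝ) (v : NNReal) (f : ℝ → ℝ)
    (hf : Integrable (fun y => f y ^ 2) (gaussianReal m v))
    (r : ℝ) (hr : |m| ≤ r) :
    |∫ y in {y : ℝ | |y| > r}, f y ∂(gaussianReal m v)|
      ≤ Real.sqrt 2 * Real.sqrt (∫ y, f y ^ 2 ∂(gaussianReal m v)) *
          Real.exp (-(r - |m|) ^ 2 / (4 * v)) := by
  calc |∫ y in {y : ℝ | |y| > r}, f y ∂(gaussianReal m v)|
      ≤ √(∫ y, f y ^ 2 ∂(gaussianReal m v)) * √((gaussianReal m v).real {y | r < |y|}) :=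
        abs_setIntegral_le_sqrt_integral_sq_mul_sqrt_measureReal hf _
    _ ≤ √(∫ y, f y ^ 2 ∂(gaussianReal m v)) * √(2 * exp (-(r - |m|) ^ 2 / (2 * v))) := by
        gcongr
        exact gaussianReal_real_lt_abs_le hr
    _ = √2 * √(∫ y, f y ^ 2 ∂(gaussianReal m v)) * exp (-(r - |m|) ^ 2 / (4 * v)) := by
        rw [sqrt_mul zero_le_two, ← exp_half, div_div]
        ring_nf

/-- Gaussian-tail truncation estimate (Cauchy–Schwarz + Chernoff): for `f` square
integrable with respect to the Gaussian measure `γ` with mean `m` and variance `v > 0`,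
and any `r ≥ |m|`,
`|∫_{|y|>r} f dγ| ≤ √2 (∫ f² dγ)^{1/2} exp(−(r−|m|)²/(4v))`. -/
theorem stmt_4 (m : ℝ) (v : NNReal) (hv : 0 < v) (f : ℝ → ℝ)
    (hf : Integrable (fun y => f y ^ 2) (gaussianReal m v))
    (r : ℝ) (hr : |m| ≤ r) :
    |∫ y in {y : ℝ | |y| > r}, f y ∂(gaussianReal m v)|
      ≤ Real.sqrt 2 * Real.sqrt (∫ y, f y ^ 2 ∂(gaussianReal m v)) *
          Real.exp (-(r - |m|) ^ 2 / (4 * v)) :=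
  stmt_4_general m v f hf r hr
end

section
/- Let M be an even positive integer, let Δx > 0 and Δν > 0 satisfy the Nyquist relation Δx·Δν = 2π/M, let x_L ∈ ℝ, and define grid points x_s = x_L + s·Δx and ν_j = −MΔν/2 + j·Δν for 0 ≤ s, j ≤ M−1. Then for all θ, ψ : {0,…,M−1} → ℂ and every k ∈ {0,…,M−1}: (ΔxΔν/(2π)) · Σ_{j=0}^{M−1} e^{iν_j x_k} ψ(j) Σ_{s=0}^{M−1} e^{−iν_j x_s} θ(s) = (−1)^k · Σ_{j=0}^{M−1} e^{2πijk/M} ψ(j) · (1/M) Σ_{s=0}^{M−1} e^{−2πijs/M} (−1)^s θ(s). -/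
open Real Complex Finset

/-- Exact DFT identity underlying the FFT implementation of the convolution method:
with even `M`, Nyquist relation `Δx·Δν = 2π/M`, grid points `x_s = x_L + sΔx` and
`ν_j = −MΔν/2 + jΔν`, the quadrature discretization of the inverse Fourier integral
equals `(−1)^k 𝔇^{−1}[{ψ_j 𝔇[{(−1)^s θ_s}]_j}]_k`. -/
theorem stmt_9 (M : ℕ) (hM : 0 < M) (hMeven : Even M)
    (Δx Δν : ℝ) (hΔx : 0 < Δx) (hΔν : 0 < Δν)
    (hNyq : Δx * Δν = 2 * Real.pi / M)
    (x_L : ℝ) (x : ℕ → ℝ) (ν : ℕ → ℝ)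
    (hx : ∀ s, x s = x_L + s * Δx)
    (hν : ∀ j, ν j = -(M * Δν) / 2 + j * Δν)
    (θ ψ : ℕ → ℂ) (k : ℕ) (hk : k < M) :
    ((Δx * Δν / (2 * Real.pi) : ℝ) : ℂ) *
      ∑ j ∈ Finset.range M, Complex.exp (Complex.I * (ν j) * (x k)) * ψ j *
        ∑ s ∈ Finset.range M, Complex.exp (-Complex.I * (ν j) * (x s)) * θ s
    = (-1 : ℂ) ^ k *
      ∑ j ∈ Finset.range M,
        Complex.exp (2 * Real.pi * Complex.I * j * k / M) * ψ j *
          ((1 / M : ℂ) *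
            ∑ s ∈ Finset.range M,
              Complex.exp (-(2 * Real.pi * Complex.I * j * s / M)) * (-1 : ℂ) ^ s * θ s) := by
  have hMne : (M : ℂ) ≠ 0 := Nat.cast_ne_zero.mpr hM.ne'
  have hπ : (Real.pi : ℂ) ≠ 0 := by exact_mod_cast Real.pi_ne_zero
  have hNyqC : (Δx : ℂ) * (Δν : ℂ) * M = 2 * (Real.pi : ℂ) := by
    have h : ((Δx * Δν : ℝ) : ℂ) = ((2 * Real.pi / M : ℝ) : ℂ) := by rw [hNyq]
    push_cast at h
    field_simp at h
    linear_combination h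
  have hconst : ((Δx * Δν / (2 * Real.pi) : ℝ) : ℂ) = 1 / M := by
    push_cast
    rw [div_eq_div_iff (mul_ne_zero two_ne_zero hπ) hMne]
    linear_combination hNyqC
  have hexpneg : Complex.exp (-(Real.pi * Complex.I)) = -1 := by
    rw [Complex.exp_neg, Complex.exp_pi_mul_I]
    norm_num
  have key : ∀ j s : ℕ,
      Complex.exp (Complex.I * (ν j) * (x k)) * Complex.exp (-Complex.I * (ν j) * (x s))
      = (-1 : ℂ) ^ k * Complex.exp (2 * Real.pi * Complex.I * j * k / M) *
        ((-1 : ℂ) ^ s * Complex.exp (-(2 * Real.pi * Complex.I * j * s / M))) := by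
    intro j s
    have hk' : ((-1 : ℂ) ^ k) = Complex.exp ((k : ℂ) * -(Real.pi * Complex.I)) := by
      rw [← hexpneg, ← Complex.exp_nat_mul]
    have hs' : ((-1 : ℂ) ^ s) = Complex.exp ((s : ℂ) * (Real.pi * Complex.I)) := by
      rw [← Complex.exp_pi_mul_I, ← Complex.exp_nat_mul]
    rw [hk', hs', ← Complex.exp_add, ← Complex.exp_add, ← Complex.exp_add, ← Complex.exp_add]
    congr 1
    rw [hν j, hx k, hx s]
    push_cast
    have hMM : (M : ℂ) * (M : ℂ)⁻¹ = 1 := mul_inv_cancel₀ hMne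
    linear_combination (Complex.I * ((k : ℂ) - (s : ℂ)) * ((j : ℂ) / M - 1 / 2)) * hNyqC +
      (-Complex.I * (Δν : ℂ) * (j : ℂ) * (Δx : ℂ) * ((k : ℂ) - (s : ℂ))) * hMM
  rw [hconst]
  simp only [Finset.mul_sum]
  refine Finset.sum_congr rfl fun j hj => Finset.sum_congr rfl fun s hs => ?_
  linear_combination (1 / (M : ℂ) * ψ j * θ s) * key j s
end

section
/- Let μ be the standard Gaussian probability measure on ℝ, let a ∈ ℝ, σ > 0, Δ > 0 and ν ∈ ℝ. Then ∫_ℝ exp( iν·(aΔ + σ√Δ·z + (1/2)σ²Δ·(z² − 1)) ) dμ(z) = (1 − iνσ²Δ)^{−1/2} · exp( iν(aΔ − (1/2)σ²Δ) − ν²σ²Δ / (2(1 − iνσ²Δ)) ), where (1 − iνσ²Δ)^{−1/2} denotes the principal branch of the complex power. -/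
open MeasureTheory ProbabilityTheory Real Complex

lemma cpow_ofReal_mul_aux {r : ℝ} (hr : 0 < r) {x : ℂ} (hx : x ≠ 0) (s : ℂ) :
    ((r : ℂ) * x) ^ s = (r : ℂ) ^ s * x ^ s := by
  have hr' : (r : ℂ) ≠ 0 := by exact_mod_cast hr.ne'
  rw [Complex.cpow_def_of_ne_zero (mul_ne_zero hr' hx), Complex.log_ofReal_mul hr hx,
    add_mul, Complex.exp_add, Complex.cpow_def_of_ne_zero hr',
    Complex.cpow_def_of_ne_zero hx, Complex.ofReal_log hr.le]

lemma const_aux {w : ℂ} (hw : 0 < w.re) :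
    ((Real.sqrt (2*π))⁻¹ : ℂ) * ((2*π : ℂ)/w) ^ ((1:ℂ)/2) = w ^ (-(1/2) : ℂ) := by
  have hw0 : w ≠ 0 := fun h => by simp [h] at hw
  have harg : w.arg ≠ π := by
    intro h
    rw [Complex.arg_eq_pi_iff] at h
    linarith [h.1]
  have h2π : (0:ℝ) < 2*π := by positivity
  have h1 : ((2*π : ℂ)/w) = ((2*π : ℝ) : ℂ) * w⁻¹ := by push_cast; ring
  rw [h1, cpow_ofReal_mul_aux h2π (inv_ne_zero hw0), Complex.inv_cpow _ _ harg,
    ← Complex.cpow_neg]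
  have h2 : ((2*π : ℝ) : ℂ) ^ ((1:ℂ)/2) = ((Real.sqrt (2*π) : ℝ) : ℂ) := by
    rw [Real.sqrt_eq_rpow, Complex.ofReal_cpow h2π.le]
    norm_num
  rw [h2, ← mul_assoc, ← Complex.ofReal_inv, ← Complex.ofReal_mul,
    inv_mul_cancel₀ (by positivity), Complex.ofReal_one, one_mul]

/-- Conditional characteristic function of the Milstein (first-order Itô–Taylor) increment:
`∫ exp(iν(aΔ + σ√Δ z + σ²Δ(z²−1)/2)) dμ(z)
  = (1 − iνσ²Δ)^{−1/2} exp(iν(aΔ − σ²Δ/2) − ν²σ²Δ/(2(1 − iνσ²Δ)))`,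
where the complex power is the principal branch. -/
theorem stmt_11 (a σ Δ ν : ℝ) (hσ : 0 < σ) (hΔ : 0 < Δ) :
    ∫ z, Complex.exp (Complex.I * ν *
          ((a : ℂ) * Δ + σ * Real.sqrt Δ * z + (1 / 2 : ℂ) * σ ^ 2 * Δ * (z ^ 2 - 1)))
        ∂(gaussianReal 0 1)
      = (1 - Complex.I * ν * σ ^ 2 * Δ) ^ (-(1 / 2) : ℂ) *
          Complex.exp (Complex.I * ν * ((a : ℂ) * Δ - (1 / 2 : ℂ) * σ ^ 2 * Δ)
            - (ν : ℂ) ^ 2 * σ ^ 2 * Δ / (2 * (1 - Complex.I * ν * σ ^ 2 * Δ))) := by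
  set B : ℂ := Complex.I * ν * σ ^ 2 * Δ / 2 - 1 / 2 with hB
  set C : ℂ := Complex.I * ν * σ * Real.sqrt Δ with hC
  set D : ℂ := Complex.I * ν * ((a : ℂ) * Δ - (1 / 2 : ℂ) * σ ^ 2 * Δ) with hD
  set w : ℂ := 1 - Complex.I * ν * σ ^ 2 * Δ with hw
  have hwre : 0 < w.re := by
    simp [hw, Complex.sub_re, Complex.mul_re, ← Complex.ofReal_pow]
  have hw0 : w ≠ 0 := fun h => by simp [h] at hwre
  have hBre : B.re < 0 := by
    simp [hB, Complex.sub_re, Complex.div_re, Complex.mul_re, ← Complex.ofReal_pow]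
  have h1 : gaussianReal 0 1 = volume.withDensity (gaussianPDF 0 1) :=
    gaussianReal_of_var_ne_zero 0 one_ne_zero
  have h2 : gaussianPDF 0 1 = fun x => ((gaussianPDFReal 0 1 x).toNNReal : ENNReal) := by
    funext x; rfl
  have hmeas : Measurable (fun x => (gaussianPDFReal 0 1 x).toNNReal) :=
    (measurable_gaussianPDFReal 0 1).real_toNNReal
  rw [h1, h2, integral_withDensity_eq_integral_smul (μ := volume) hmeas]
  have hpt : ∀ z : ℝ, (gaussianPDFReal 0 1 z).toNNReal • (Complex.exp (Complex.I * ν *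
          ((a : ℂ) * Δ + σ * Real.sqrt Δ * z + (1 / 2 : ℂ) * σ ^ 2 * Δ * (z ^ 2 - 1))))
      = ((Real.sqrt (2*π))⁻¹ : ℂ) * Complex.exp (B * z ^ 2 + C * z + D) := by
    intro z
    rw [NNReal.smul_def, Real.coe_toNNReal _ (gaussianPDFReal_nonneg 0 1 z), Complex.real_smul,
      gaussianPDFReal]
    push_cast
    rw [mul_assoc, ← Complex.exp_add]
    congr 1
    · norm_num
    · congr 1
      rw [hB, hC, hD]
      ring
  simp_rw [hpt]
  rw [integral_const_mul, integral_cexp_quadratic hBre C D]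
  have hB0 : -B = w / 2 := by rw [hB, hw]; ring
  have h3 : ((π : ℂ)) / (-B) = (2*π : ℂ) / w := by
    rw [hB0, div_div_eq_mul_div, mul_comm]
  have hs : ((Real.sqrt Δ : ℝ) : ℂ) ^ 2 = (Δ : ℂ) := by
    rw [← Complex.ofReal_pow, Real.sq_sqrt hΔ.le]
  have hC2 : C ^ 2 = -((ν:ℂ)^2 * σ^2 * Δ) :=
    calc C ^ 2 = Complex.I ^ 2 * ν ^ 2 * σ ^ 2 * ((Real.sqrt Δ : ℝ) : ℂ) ^ 2 := by rw [hC]; ring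
    _ = -((ν:ℂ)^2 * σ^2 * Δ) := by rw [Complex.I_sq, hs]; ring
  have h4B : (4:ℂ) * B = -(2 * w) := by rw [hB, hw]; ring
  rw [h3, ← mul_assoc, const_aux hwre, hC2, h4B, neg_div_neg_eq]
end

section
/- Let μ be the standard Gaussian probability measure on ℝ, let σ > 0, Δ > 0 and ν ∈ ℝ, and write S(z) = σ√Δ·z + (1/2)σ²Δ·(z² − 1). Then ∫_ℝ z·exp(iν·S(z)) dμ(z) = (iνσ√Δ / (1 − iνσ²Δ)) · ∫_ℝ exp(iν·S(z)) dμ(z). -/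
/-!
Gaussian integration by parts (Stein's lemma) gives `∫ z f(z) dμ = ∫ f'(z) dμ` for the standard
Gaussian `μ`. For `f = exp(iν S)` we have `f' = iν(σ√Δ + σ²Δ z) f`, hence
`∫ z f = iνσ√Δ ∫ f + iνσ²Δ ∫ z f`, and one solves for `∫ z f`: the factor `1 − iνσ²Δ` has real
part `1`. Since `S` is real, `f` is unimodular, which makes every integral involved finite.
-/

open MeasureTheory ProbabilityTheory Real Complex
open scoped NNReal

namespace ProbabilityTheory

lemma hasDerivAt_gaussianPDFReal (μ : ℝ) (v : ℝ≥0) (x : ℝ) :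
    HasDerivAt (gaussianPDFReal μ v) (-((x - μ) / v) * gaussianPDFReal μ v x) x := by
  have hsq : HasDerivAt (fun x => -(x - μ) ^ 2 / (2 * v)) (-((x - μ) / v)) x := by
    refine ((((hasDerivAt_id' x).sub_const μ).pow 2).neg.div_const (2 * (v : ℝ))).congr_deriv ?_
    simp [neg_div, mul_div_mul_left _ _ (two_ne_zero' ℝ)]
  rw [gaussianPDFReal_def]
  exact (hsq.exp.const_mul (√(2 * π * v))⁻¹).congr_deriv (by ring)

variable {μ : ℝ} {v : ℝ≥0}

lemma integrable_gaussianReal_iff {E : Type*} [NormedAddCommGroup E] [NormedSpace ℝ E]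
    (hv : v ≠ 0) {f : ℝ → E} :
    Integrable f (gaussianReal μ v) ↔ Integrable (fun x => gaussianPDFReal μ v x • f x) := by
  rw [gaussianReal_of_var_ne_zero _ hv, integrable_withDensity_iff_integrable_smul'
    (measurable_gaussianPDF _ _) (ae_of_all _ fun _ ↦ gaussianPDF_lt_top)]
  simp only [toReal_gaussianPDF]

theorem integral_sub_smul_gaussianReal {E : Type*} [NormedAddCommGroup E] [NormedSpace ℝ E]
    [CompleteSpace E] {f f' : ℝ → E} (hderiv : ∀ x, HasDerivAt f (f' x) x)
    (hf : Integrable f (gaussianReal μ v)) (hf' : Integrable f' (gaussianReal μ v))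
    (hxf : Integrable (fun x => (x - μ) • f x) (gaussianReal μ v)) :
    ∫ x, (x - μ) • f x ∂gaussianReal μ v = (v : ℝ) • ∫ x, f' x ∂gaussianReal μ v := by
  rcases eq_or_ne v 0 with rfl | hv
  · rw [gaussianReal_zero_var, integral_dirac]; simp
  have hv' : (v : ℝ) ≠ 0 := NNReal.coe_ne_zero.2 hv
  set φ := gaussianPDFReal μ v
  have hderiv_φf (x : ℝ) : HasDerivAt (fun x => φ x • f x)
      (φ x • f' x - (v : ℝ)⁻¹ • (φ x • (x - μ) • f x)) x :=
    ((hasDerivAt_gaussianPDFReal μ v x).smul (hderiv x)).congr_deriv (by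
      rw [div_eq_mul_inv]; module)
  have hφf' := (integrable_gaussianReal_iff hv).1 hf'
  have hφxf := ((integrable_gaussianReal_iff hv).1 hxf).fun_smul (v : ℝ)⁻¹
  have h := integral_eq_zero_of_hasDerivAt_of_integrable hderiv_φf (hφf'.sub hφxf)
    ((integrable_gaussianReal_iff hv).1 hf)
  rw [integral_sub hφf' hφxf, integral_smul, sub_eq_zero] at h
  rw [integral_gaussianReal_eq_integral_smul hv, integral_gaussianReal_eq_integral_smul hv, h,
    smul_inv_smul₀ hv']

lemma integral_mul_cexp_quadratic_phase_gaussianReal (v : ℝ≥0) (a b c : ℝ) :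
    ∫ z, (z : ℂ) * cexp (I * (a * z + b * z ^ 2 + c)) ∂gaussianReal 0 v
      = I * a * v / (1 - 2 * I * b * v) *
          ∫ z, cexp (I * (a * z + b * z ^ 2 + c)) ∂gaussianReal 0 v := by
  set f : ℝ → ℂ := fun z => cexp (I * (a * z + b * z ^ 2 + c))
  have hnorm (z : ℝ) : ‖f z‖ = 1 := by
    simp [f, Complex.norm_exp, ← ofReal_pow]
  have hderiv (z : ℝ) : HasDerivAt f (I * a * f z + 2 * I * b * (z * f z)) z := by
    have hphase : HasDerivAt (fun w : ℂ => I * (a * w + b * w ^ 2 + c)) (I * (a + 2 * b * z)) z :=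
      (((((hasDerivAt_id' (z : ℂ)).const_mul (a : ℂ)).add
        ((hasDerivAt_pow 2 (z : ℂ)).const_mul (b : ℂ))).add_const (c : ℂ)).const_mul I
        ).congr_deriv (by ring)
    exact hphase.comp_ofReal.cexp.congr_deriv (by ring)
  have hf_meas : AEStronglyMeasurable f (gaussianReal 0 v) :=
    (continuous_iff_continuousAt.2 fun z => (hderiv z).continuousAt).aestronglyMeasurable
  have hf : Integrable f (gaussianReal 0 v) :=
    Integrable.of_bound hf_meas 1 (ae_of_all _ fun z => (hnorm z).le)
  have hzf : Integrable (fun z : ℝ => (z : ℂ) * f z) (gaussianReal 0 v) :=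
    ((memLp_id_gaussianReal 1).integrable le_rfl).mono
      (continuous_ofReal.aestronglyMeasurable.mul hf_meas) (ae_of_all _ fun z => by simp [hnorm])
  have hstein := integral_sub_smul_gaussianReal hderiv hf
    ((hf.const_mul _).add (hzf.const_mul _)) (by simpa using hzf)
  simp only [sub_zero, real_smul] at hstein
  rw [integral_add (hf.const_mul _) (hzf.const_mul _), integral_const_mul, integral_const_mul]
    at hstein
  have hne : (1 : ℂ) - 2 * I * b * v ≠ 0 := by
    intro h
    simpa using congrArg re h
  change ∫ z, (z : ℂ) * f z ∂gaussianReal 0 v = _ * ∫ z, f z ∂gaussianReal 0 v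
  rw [div_mul_eq_mul_div, eq_div_iff hne]
  linear_combination hstein

end ProbabilityTheory

theorem stmt_13_general (σ Δ ν : ℝ) :
    ∫ z, (z : ℂ) * Complex.exp (Complex.I * ν *
          ((σ : ℂ) * Real.sqrt Δ * z + (1 / 2 : ℂ) * σ ^ 2 * Δ * (z ^ 2 - 1)))
        ∂(gaussianReal 0 1)
      = (Complex.I * ν * σ * Real.sqrt Δ / (1 - Complex.I * ν * σ ^ 2 * Δ)) *
          ∫ z, Complex.exp (Complex.I * ν *
            ((σ : ℂ) * Real.sqrt Δ * z + (1 / 2 : ℂ) * σ ^ 2 * Δ * (z ^ 2 - 1)))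
          ∂(gaussianReal 0 1) := by
  have hquadratic (z : ℝ) :
      I * ν * ((σ : ℂ) * Real.sqrt Δ * z + (1 / 2 : ℂ) * σ ^ 2 * Δ * (z ^ 2 - 1))
        = I * (((ν * σ * √Δ : ℝ) : ℂ) * z + ((ν * σ ^ 2 * Δ / 2 : ℝ) : ℂ) * z ^ 2
            + ((-(ν * σ ^ 2 * Δ / 2) : ℝ) : ℂ)) := by
    push_cast; ring
  simp_rw [hquadratic]
  rw [integral_mul_cexp_quadratic_phase_gaussianReal]
  congr 1
  push_cast
  ring

/-- Gaussian integration-by-parts (Malliavin duality) identity for the Milstein increment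
`S(z) = σ√Δ z + σ²Δ(z²−1)/2`:
`∫ z exp(iνS(z)) dμ(z) = (iνσ√Δ/(1 − iνσ²Δ)) ∫ exp(iνS(z)) dμ(z)`. -/
theorem stmt_13 (σ Δ ν : ℝ) (hσ : 0 < σ) (hΔ : 0 < Δ) :
    ∫ z, (z : ℂ) * Complex.exp (Complex.I * ν *
          ((σ : ℂ) * Real.sqrt Δ * z + (1 / 2 : ℂ) * σ ^ 2 * Δ * (z ^ 2 - 1)))
        ∂(gaussianReal 0 1)
      = (Complex.I * ν * σ * Real.sqrt Δ / (1 - Complex.I * ν * σ ^ 2 * Δ)) *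
          ∫ z, Complex.exp (Complex.I * ν *
            ((σ : ℂ) * Real.sqrt Δ * z + (1 / 2 : ℂ) * σ ^ 2 * Δ * (z ^ 2 - 1)))
          ∂(gaussianReal 0 1) :=
  stmt_13_general σ Δ ν
end
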